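/- For a fair coin and distinct length-3 patterns A = HTH and B = TTH, neither a substring of the other, the expected waiting time until the first occurrence of A or B equals (R_A(A)·R_B(B) − R_A(B)·R_B(A)) / (R_A(A) + R_B(B) − R_A(B) − R_B(A)) = 5, where R_X(Y) = 2·(Conway leading number XY). -/

import Mathlib

/-!
Every length-3 word ending in `TH` is `HTH` or `TTH`, so the first occurrence of either pattern is
the first time `n ≥ 3` at which flips `n - 2, n - 1` read `T, H`. Hence `τ > n` exactly when flips
`1, …, n - 1` contain no `TH`, i.e. read `H⋯HT⋯T`; for `L` flips this has probability
`(L + 1) / 2 ^ L`. Summing tail probabilities, `𝔼 τ = 1 + ∑_L (L + 1) / 2 ^ L = 5`, which is also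
Conway's ratio `80 / 16`.
-/

open MeasureTheory ProbabilityTheory
open scoped ENNReal

/-- The pattern `P` occurs at time `n` (i.e. within the first `n` draws
`x 0, …, x (n-1)`, as the final block of `P.length` consecutive draws). -/
def occursAt {α : Type*} (P : List α) (x : ℕ → α) (n : ℕ) : Prop :=
  P.length ≤ n ∧ ∀ i (h : i < P.length), x (n - P.length + i) = P.get ⟨i, h⟩

/-- The first time at which the pattern `P` occurs (`∞` if it never occurs). -/
noncomputable def hitTime {α : Type*} (P : List α) (x : ℕ → α) : ℝ≥0∞ :=
  sInf ((fun n : ℕ => (n : ℝ≥0∞)) '' {n | occursAt P x n})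

/-- The fair-coin distribution on `Bool` (`true` = heads `H`, `false` = tails `T`). -/
noncomputable def fairCoin : Measure Bool := (PMF.bernoulli (1/2) (by norm_num)).toMeasure

/-- R_X(Y) = 2·(Conway leading number XY) for length-3 patterns:
R_X(Y) = ∑_{s=1}^{3} 2^{4-s} · [trailing (4-s) characters of X = leading (4-s) characters of Y]. -/
def R3 (X Y : List Bool) : ℕ :=
  ∑ s ∈ Finset.Icc 1 3, if X.drop (s - 1) = Y.take (4 - s) then 2 ^ (4 - s) else 0

/-- The pattern A = HTH. -/
def patA : List Bool := [true, false, true]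

/-- The pattern B = TTH. -/
def patB : List Bool := [false, false, true]

/-- Flip `0` is excluded: a length-3 pattern ending at time `n` uses flips `n - 3, n - 2, n - 1`. -/
def tailsHeadsTimes (x : ℕ → Bool) : Set ℕ :=
  {n | 3 ≤ n ∧ x (n - 2) = false ∧ x (n - 1) = true}

theorem occursAt_triple_iff {α : Type*} (a b c : α) (x : ℕ → α) (n : ℕ) :
    occursAt [a, b, c] x n ↔ 3 ≤ n ∧ x (n - 3) = a ∧ x (n - 2) = b ∧ x (n - 1) = c := by
  simp only [occursAt, List.length_cons, List.length_nil]
  refine and_congr_right fun hn => ?_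
  rw [show n - 2 = n - 3 + 1 by omega, show n - 1 = n - 3 + 2 by omega]
  constructor
  · intro h
    exact ⟨h 0 (by norm_num), h 1 (by norm_num), h 2 (by norm_num)⟩
  · rintro ⟨h0, h1, h2⟩ i hi
    interval_cases i <;> assumption

theorem setOf_occursAt_patA_or_patB (x : ℕ → Bool) :
    {n | occursAt patA x n ∨ occursAt patB x n} = tailsHeadsTimes x := by
  ext n
  simp only [Set.mem_ofPred_eq, tailsHeadsTimes, patA, patB, occursAt_triple_iff]
  cases x (n - 3) <;> simp

theorem min_hitTime_eq_sInf {α : Type*} (P Q : List α) (x : ℕ → α) :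
    min (hitTime P x) (hitTime Q x) =
      sInf (((↑) : ℕ → ℝ≥0∞) '' {n | occursAt P x n ∨ occursAt Q x n}) := by
  rw [hitTime, hitTime, ← sInf_union, ← Set.image_union]
  rfl

theorem sInf_natCast_image_eq_tsum (S : Set ℕ) :
    sInf (((↑) : ℕ → ℝ≥0∞) '' S) = ∑' n : ℕ, {n | ∀ m ∈ S, n < m}.indicator 1 n := by
  rcases S.eq_empty_or_nonempty with rfl | hS
  · simp
  · have hinf : sInf (((↑) : ℕ → ℝ≥0∞) '' S) = (sInf S : ℕ) :=
      le_antisymm (sInf_le ⟨_, Nat.sInf_mem hS, rfl⟩)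
        (le_sInf <| by rintro _ ⟨m, hm, rfl⟩; exact Nat.cast_le.mpr (Nat.sInf_le hm))
    have hlt : {n | ∀ m ∈ S, n < m} = Finset.range (sInf S) := by
      ext n
      exact ⟨fun h => Finset.mem_range.mpr (h _ (Nat.sInf_mem hS)),
        fun h m hm => (Finset.mem_range.mp h).trans_le (Nat.sInf_le hm)⟩
    rw [hinf, hlt, tsum_eq_sum fun n hn => Set.indicator_of_notMem hn _,
      Finset.sum_congr rfl fun n hn => Set.indicator_of_mem (Finset.mem_coe.mpr hn) _]
    simp

theorem forall_lt_of_mem_tailsHeadsTimes_iff (x : ℕ → Bool) (n : ℕ) :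
    (∀ m ∈ tailsHeadsTimes x, n < m) ↔ AntitoneOn x (Set.Icc 1 (n - 1)) := by
  constructor
  · intro h
    refine antitoneOn_of_add_one_le Set.ordConnected_Icc fun j _ ⟨hj, _⟩ ⟨_, hjn⟩ => ?_
    have hth : ¬ (x j = false ∧ x (j + 1) = true) := fun ⟨hf, ht⟩ =>
      absurd (h (j + 2) ⟨by omega, hf, ht⟩) (by omega)
    revert hth
    cases x j <;> cases x (j + 1) <;> decide
  · rintro h m ⟨hm, hf, ht⟩
    by_contra! hmn
    have := h ⟨by omega, by omega⟩ ⟨by omega, by omega⟩ (by omega : m - 2 ≤ m - 1)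
    rw [hf, ht] at this
    exact absurd this (by decide)

theorem antitoneOn_Icc_iff_exists_eq_decide (x : ℕ → Bool) (L : ℕ) :
    AntitoneOn x (Set.Icc 1 L) ↔
      ∃ k ∈ Finset.range (L + 1), ∀ j ∈ Set.Icc 1 L, x j = decide (j ≤ k) := by
  constructor
  · intro h
    set k := Nat.findGreatest (fun j => x j = true) L with hk
    have hkL : k ≤ L := Nat.findGreatest_le L
    refine ⟨k, Finset.mem_range.mpr (by omega), fun j ⟨hj, hjL⟩ => ?_⟩
    by_cases hjk : j ≤ k
    · have hkt : x k = true := Nat.findGreatest_of_ne_zero hk.symm (by omega)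
      have := h ⟨hj, hjL⟩ ⟨by omega, hkL⟩ hjk
      rw [hkt] at this
      simpa [hjk] using top_le_iff.mp this
    · simpa [hjk] using Nat.findGreatest_is_greatest (P := fun j => x j = true) (by omega) hjL
  · rintro ⟨k, -, hk⟩ i hi j hj hij
    rw [hk i hi, hk j hj]
    by_cases hjk : j ≤ k
    · simp [hjk, show i ≤ k by omega]
    · simp [hjk]

theorem tsum_natCast_add_one_mul_inv_two_pow : ∑' L : ℕ, ((L : ℝ≥0∞) + 1) * 2⁻¹ ^ L = 4 := by
  have hr : ‖(2⁻¹ : ℝ)‖ < 1 := by norm_num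
  have hsum : HasSum (fun L : ℕ => ((L : ℝ) + 1) * 2⁻¹ ^ L) 4 := by
    have h := (hasSum_coe_mul_geometric_of_norm_lt_one hr).add (hasSum_geometric_of_norm_lt_one hr)
    norm_num [← add_one_mul] at h ⊢
    exact h
  rw [← ENNReal.ofReal_ofNat 4, ← hsum.tsum_eq,
    ENNReal.ofReal_tsum_of_nonneg (fun _ => by positivity) hsum.summable]
  congr 1 with L
  rw [ENNReal.ofReal_mul (by positivity), ENNReal.ofReal_pow (by norm_num)]
  simp [ENNReal.ofReal_add, ENNReal.ofReal_inv_of_pos]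

theorem fairCoin_singleton (b : Bool) : fairCoin {b} = 2⁻¹ := by
  rw [fairCoin, PMF.toMeasure_apply_singleton _ _ (measurableSet_singleton b)]
  cases b
  · show ((1 - 1 / 2 : NNReal) : ℝ≥0∞) = 2⁻¹
    norm_num
  · show ((1 / 2 : NNReal) : ℝ≥0∞) = 2⁻¹
    norm_num

section

variable {Ω : Type*} {X : ℕ → Ω → Bool}

theorem setOf_antitoneOn_Icc_eq_biUnion (L : ℕ) :
    {ω | AntitoneOn (fun i => X i ω) (Set.Icc 1 L)} =
      ⋃ k ∈ Finset.range (L + 1), ⋂ j ∈ Finset.Icc 1 L, X j ⁻¹' {decide (j ≤ k)} := by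
  ext ω
  simp [antitoneOn_Icc_iff_exists_eq_decide]

variable [MeasurableSpace Ω] {μ : Measure Ω}

theorem lintegral_sInf_natCast_image_eq_tsum (S : Ω → Set ℕ)
    (hS : ∀ n, MeasurableSet {ω | ∀ m ∈ S ω, n < m}) :
    ∫⁻ ω, sInf (((↑) : ℕ → ℝ≥0∞) '' S ω) ∂μ = ∑' n, μ {ω | ∀ m ∈ S ω, n < m} := by
  simp_rw [sInf_natCast_image_eq_tsum]
  rw [lintegral_tsum fun n => ?_]
  · refine tsum_congr fun n => ?_
    rw [← lintegral_indicator_one (hS n)]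
    rfl
  · exact (measurable_const.indicator (hS n)).aemeasurable.congr (.of_forall fun _ => rfl)

theorem measure_preimage_singleton_of_map_eq_fairCoin {Y : Ω → Bool} (hY : Measurable Y)
    (hfair : μ.map Y = fairCoin) (b : Bool) : μ (Y ⁻¹' {b}) = 2⁻¹ := by
  rw [← Measure.map_apply hY (measurableSet_singleton b), hfair, fairCoin_singleton]

theorem measure_biInter_preimage_singleton (hmeas : ∀ n, Measurable (X n))
    (hindep : iIndepFun X μ) (hfair : ∀ n, μ.map (X n) = fairCoin) (s : Finset ℕ) (f : ℕ → Bool) :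
    μ (⋂ j ∈ s, X j ⁻¹' {f j}) = 2⁻¹ ^ s.card := by
  rw [hindep.measure_inter_preimage_eq_mul s fun _ _ => measurableSet_singleton _,
    Finset.prod_congr rfl fun j _ => measure_preimage_singleton_of_map_eq_fairCoin (hmeas j)
      (hfair j) (f j), Finset.prod_const]

theorem measurableSet_antitoneOn_Icc (hmeas : ∀ n, Measurable (X n)) (L : ℕ) :
    MeasurableSet {ω | AntitoneOn (fun i => X i ω) (Set.Icc 1 L)} := by
  rw [setOf_antitoneOn_Icc_eq_biUnion]
  exact .biUnion (Finset.countable_toSet _) fun k _ =>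
    .biInter (Finset.countable_toSet _) fun j _ => hmeas j (measurableSet_singleton _)

theorem measure_antitoneOn_Icc (hmeas : ∀ n, Measurable (X n)) (hindep : iIndepFun X μ)
    (hfair : ∀ n, μ.map (X n) = fairCoin) (L : ℕ) :
    μ {ω | AntitoneOn (fun i => X i ω) (Set.Icc 1 L)} = ((L : ℝ≥0∞) + 1) * 2⁻¹ ^ L := by
  have hdisj : (Finset.range (L + 1) : Set ℕ).PairwiseDisjoint
      fun k => ⋂ j ∈ Finset.Icc 1 L, X j ⁻¹' {decide (j ≤ k)} := by
    intro k hk k' hk' hne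
    wlog hlt : k < k' generalizing k k'
    · exact (this hk' hk hne.symm (by omega)).symm
    refine Set.disjoint_left.mpr fun ω hω hω' => ?_
    have hmem : k + 1 ∈ Finset.Icc 1 L :=
      Finset.mem_Icc.mpr ⟨by omega, by simp only [Finset.coe_range, Set.mem_Iio] at hk'; omega⟩
    have h := (Set.mem_iInter₂.mp hω _ hmem).symm.trans (Set.mem_iInter₂.mp hω' _ hmem)
    simp only [decide_eq_decide] at h
    omega
  rw [setOf_antitoneOn_Icc_eq_biUnion, measure_biUnion_finset hdisj fun k _ =>
      .biInter (Finset.countable_toSet _) fun j _ => hmeas j (measurableSet_singleton _),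
    Finset.sum_congr rfl fun k _ => measure_biInter_preimage_singleton hmeas hindep hfair _ _]
  simp

end

theorem stmt_8_general {Ω : Type*} [MeasurableSpace Ω] (μ : Measure Ω)
    (X : ℕ → Ω → Bool) (hmeas : ∀ n, Measurable (X n))
    (hindep : iIndepFun X μ)
    (hfair : ∀ n, μ.map (X n) = fairCoin) :
    (∫⁻ ω, min (hitTime patA (fun n => X n ω)) (hitTime patB (fun n => X n ω)) ∂μ =
      ((R3 patA patA * R3 patB patB - R3 patA patB * R3 patB patA : ℕ) : ℝ≥0∞) /
        ((R3 patA patA + R3 patB patB - R3 patA patB - R3 patB patA : ℕ) : ℝ≥0∞)) ∧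
    ((R3 patA patA * R3 patB patB - R3 patA patB * R3 patB patA : ℕ) : ℝ≥0∞) /
        ((R3 patA patA + R3 patB patB - R3 patA patB - R3 patB patA : ℕ) : ℝ≥0∞) = 5 := by
  have hratio : ((R3 patA patA * R3 patB patB - R3 patA patB * R3 patB patA : ℕ) : ℝ≥0∞) /
      ((R3 patA patA + R3 patB patB - R3 patA patB - R3 patB patA : ℕ) : ℝ≥0∞) = 5 := by
    rw [show R3 patA patA * R3 patB patB - R3 patA patB * R3 patB patA = 80 by decide,
      show R3 patA patA + R3 patB patB - R3 patA patB - R3 patB patA = 16 by decide,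
      eq_comm, ENNReal.eq_div_iff (by norm_num) (by norm_num)]
    norm_num
  refine ⟨hratio ▸ ?_, hratio⟩
  have hevent (n : ℕ) : {ω | ∀ m ∈ tailsHeadsTimes (fun i => X i ω), n < m} =
      {ω | AntitoneOn (fun i => X i ω) (Set.Icc 1 (n - 1))} :=
    Set.ext fun ω => forall_lt_of_mem_tailsHeadsTimes_iff (fun i => X i ω) n
  simp_rw [min_hitTime_eq_sInf, setOf_occursAt_patA_or_patB]
  rw [lintegral_sInf_natCast_image_eq_tsum _ fun n => hevent n ▸ measurableSet_antitoneOn_Icc hmeas _]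
  simp_rw [hevent, measure_antitoneOn_Icc hmeas hindep hfair]
  -- the term `n = 0` equals `1` because `0 - 1 = 0` in `ℕ`
  rw [tsum_eq_zero_add' ENNReal.summable]
  simp only [Nat.add_sub_cancel, Nat.zero_sub, tsum_natCast_add_one_mul_inv_two_pow]
  norm_num

/-- For A = HTH and B = TTH (distinct, neither a substring of the other), the expected
waiting time until the first occurrence of A or B equals
(R_A(A)·R_B(B) − R_A(B)·R_B(A)) / (R_A(A) + R_B(B) − R_A(B) − R_B(A)) = 5. -/
theorem stmt_8 {Ω : Type*} [MeasurableSpace Ω] (μ : Measure Ω) [IsProbabilityMeasure μ]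
    (X : ℕ → Ω → Bool) (hmeas : ∀ n, Measurable (X n))
    (hindep : iIndepFun X μ)
    (hfair : ∀ n, μ.map (X n) = fairCoin) :
    (∫⁻ ω, min (hitTime patA (fun n => X n ω)) (hitTime patB (fun n => X n ω)) ∂μ =
      ((R3 patA patA * R3 patB patB - R3 patA patB * R3 patB patA : ℕ) : ℝ≥0∞) /
        ((R3 patA patA + R3 patB patB - R3 patA patB - R3 patB patA : ℕ) : ℝ≥0∞)) ∧
    ((R3 patA patA * R3 patB patB - R3 patA patB * R3 patB patA : ℕ) : ℝ≥0∞) /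
        ((R3 patA patA + R3 patB patB - R3 patA patB - R3 patB patA : ℕ) : ℝ≥0∞) = 5 :=
  stmt_8_general μ X hmeas hindep hfair
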